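/- arXiv:math/0412330 — 2 statements merged into one kernel-verified Lean document; each statement's English description precedes it below -/
import Mathlib

section
/- Let U = R ⧸ ((λ−1)(μ+1)) be the quotient of R by the principal ideal generated by (λ−1)(μ+1), and let C = R[x] ⧸ (λx² − λx − μ² − μ, λx² − μx − μ − 1) be the quotient of the polynomial ring R[x] by the ideal generated by the two listed polynomials. Then there is no R-algebra isomorphism between U and C. -/
noncomputable /-
The trefoil algebra has `R`-algebra maps wherever `λ = μ³`: send `x` to `-μ⁻¹`. Over the
evaluation `(λ, μ) = (8, 2)` this gives an `R`-algebra map to `ℚ`, whereas an `R`-algebra map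
from the unknot algebra kills `(λ - 1)(μ + 1)`, which evaluates to `7 · 3 ≠ 0`.
-/

section

open Polynomial

/-- The Laurent polynomial ring `ℤ[λ^{±1}, μ^{±1}]`. -/
abbrev R : Type := AddMonoidAlgebra ℤ (ℤ × ℤ)

/-- The variable `λ`. -/
def lam : R := AddMonoidAlgebra.single (1, 0) 1

/-- The variable `μ`. -/
def mu : R := AddMonoidAlgebra.single (0, 1) 1

/-- The cord algebra of the unknot: `R ⧸ ((λ−1)(μ+1))`. -/
abbrev U : Type := R ⧸ Ideal.span {(lam - 1) * (mu + 1)}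

/-- The ideal `(λx² − λx − μ² − μ, λx² − μx − μ − 1)` of `R[x]`. -/
def trefIdeal : Ideal (Polynomial R) :=
  Ideal.span {C lam * X ^ 2 - C lam * X - C (mu ^ 2) - C mu,
              C lam * X ^ 2 - C mu * X - C mu - 1}

/-- The cord algebra of the left-handed trefoil:
`R[x] ⧸ (λx² − λx − μ² − μ, λx² − μx − μ − 1)`. -/
abbrev CTref : Type := Polynomial R ⧸ trefIdeal

section

variable {S : Type*}

def laurentEval [CommRing S] (u v : Sˣ) : R →+* S :=
  (AddMonoidAlgebra.lift ℤ S (ℤ × ℤ) <| (Units.coeHom S).comp <|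
    ((zpowersHom Sˣ u).coprod (zpowersHom Sˣ v)).comp
      (MulEquiv.prodMultiplicative ℤ ℤ).toMonoidHom).toRingHom

theorem laurentEval_lam [CommRing S] (u v : Sˣ) : laurentEval u v lam = u := by
  simp [laurentEval, lam, AddMonoidAlgebra.lift_single]

theorem laurentEval_mu [CommRing S] (u v : Sˣ) : laurentEval u v mu = v := by
  simp [laurentEval, mu, AddMonoidAlgebra.lift_single]

theorem algebraMap_lam_sub_one_mul_mu_add_one_eq_zero [Semiring S] [Algebra R S]
    (f : U →ₐ[R] S) : algebraMap R S ((lam - 1) * (mu + 1)) = 0 := by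
  rw [← f.commutes, Ideal.Quotient.algebraMap_eq, Ideal.Quotient.mk_singleton_self, map_zero]

def CTref.lift [CommRing S] [Algebra R S] (x : S)
    (h₁ : algebraMap R S lam * x ^ 2 - algebraMap R S lam * x - algebraMap R S mu ^ 2
      - algebraMap R S mu = 0)
    (h₂ : algebraMap R S lam * x ^ 2 - algebraMap R S mu * x - algebraMap R S mu - 1 = 0) :
    CTref →ₐ[R] S :=
  Ideal.Quotient.liftₐ trefIdeal (aeval x) fun a ha => by
    refine (Ideal.span_le (I := RingHom.ker (aeval x : R[X] →ₐ[R] S))).mpr ?_ ha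
    rintro p (rfl | rfl) <;> simpa [RingHom.mem_ker]

theorem CTref.nonempty_algHom_of_lam_eq_mu_pow_three [CommRing S] [Algebra R S]
    (hlam : algebraMap R S lam = algebraMap R S mu ^ 3) {x : S}
    (hx : algebraMap R S mu * x = -1) : Nonempty (CTref →ₐ[R] S) := by
  set m := algebraMap R S mu
  refine ⟨CTref.lift x ?_ ?_⟩ <;> rw [hlam]
  -- `μx = -1` gives `μ³x² = μ` and `μ³x = -μ²`
  · linear_combination (m * (m * x - 1) - m ^ 2) * hx
  · linear_combination (m * (m * x - 1) - 1) * hx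

end

/-- The cord algebra of the left-handed trefoil is not isomorphic, as an
`R`-algebra, to the cord algebra of the unknot. -/
theorem unknot_not_isomorphic_trefoil : ¬ Nonempty (U ≃ₐ[R] CTref) := by
  rintro ⟨e⟩
  let two : ℚˣ := Units.mk0 2 two_ne_zero
  let : Algebra R ℚ := (laurentEval (two ^ 3) two).toAlgebra
  have hlam : algebraMap R ℚ lam = 8 := by
    rw [RingHom.algebraMap_toAlgebra, laurentEval_lam]; norm_num [two]
  have hmu : algebraMap R ℚ mu = 2 := laurentEval_mu _ _
  obtain ⟨f⟩ := CTref.nonempty_algHom_of_lam_eq_mu_pow_three (x := (-1 / 2 : ℚ))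
    (by rw [hlam, hmu]; norm_num) (by rw [hmu]; norm_num)
  have := algebraMap_lam_sub_one_mul_mu_add_one_eq_zero (f.comp e.toAlgHom)
  rw [map_mul, map_sub, map_add, map_one, hlam, hmu] at this
  norm_num at this
end
end

section
/- Fix n ≥ 1, maps o, l, r : Fin n → Fin n such that for every α the three indices l(α), r(α), o(α) are pairwise distinct, and ε ∈ ℤ with ε = 1 or ε = −1. Let 𝒜 be the free (noncommutative, unital) R-algebra on generators a_{ij} for i, j ∈ Fin n with i ≠ j. Define n×n matrices over 𝒜: A_{ij} = 1+μ if i = j and a_{ij} if i ≠ j; (Ψ^L)_{αi} = λ^{−ε} if α = 0 and i = r(0), = 1 if α ≠ 0 and i = r(α), = μ if i = l(α), = −a_{l(α)o(α)} if i = o(α), and 0 otherwise; (Ψ^R)_{iα} = λ^{ε}μ if α = 0 and i = r(0), = μ if α ≠ 0 and i = r(α), = 1 if i = l(α), = −a_{o(α)l(α)} if i = o(α), and 0 otherwise; (Ψ^L₂)_{αi} = μ if i = l(α), = −a_{l(α)o(α)} if i = o(α), and 0 otherwise; (Ψ^R₁)_{iα} = λ^{ε}μ if α = 0 and i = r(0),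 = μ if α ≠ 0 and i = r(α), and 0 otherwise. Then for every α ∈ Fin n, the diagonal entries agree: (Ψ^L · A · Ψ^R₁)_{αα} = (Ψ^L₂ · A · Ψ^R)_{αα}. -/
noncomputable section

/-- The Laurent monomial `λᵏ` for `k : ℤ`. -/
def lamPow (k : ℤ) : R := AddMonoidAlgebra.single (k, 0) 1

/-- Index type of the generators `a_{ij}`, `i ≠ j`. -/
abbrev Idx (n : ℕ) : Type := {p : Fin n × Fin n // p.1 ≠ p.2}

/-- The free noncommutative unital `R`-algebra on the generators `a_{ij}`. -/
abbrev FA (n : ℕ) : Type := FreeAlgebra R (Idx n)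

/-- The generator `a_{ij}`. -/
def gen {n : ℕ} (i j : Fin n) (h : i ≠ j) : FA n := FreeAlgebra.ι R ⟨(i, j), h⟩

/-- The matrix `A`: `1 + μ` on the diagonal, `a_{ij}` off the diagonal. -/
def Amat (n : ℕ) : Matrix (Fin n) (Fin n) (FA n) := fun i j =>
  if h : i = j then algebraMap R (FA n) (1 + mu) else gen i j h

/-- The matrix `Ψ^L` of the framed knot DGA. -/
def PsiL (n : ℕ) [NeZero n] (o l r : Fin n → Fin n)
    (hlo : ∀ α, l α ≠ o α) (ε : ℤ) : Matrix (Fin n) (Fin n) (FA n) :=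
  fun α i =>
    if α = 0 ∧ i = r 0 then algebraMap R (FA n) (lamPow (-ε))
    else if α ≠ 0 ∧ i = r α then 1
    else if i = l α then algebraMap R (FA n) mu
    else if i = o α then -(gen (l α) (o α) (hlo α))
    else 0

/-- The matrix `Ψ^R` of the framed knot DGA. -/
def PsiR (n : ℕ) [NeZero n] (o l r : Fin n → Fin n)
    (hlo : ∀ α, l α ≠ o α) (ε : ℤ) : Matrix (Fin n) (Fin n) (FA n) :=
  fun i α =>
    if α = 0 ∧ i = r 0 then algebraMap R (FA n) (lamPow ε * mu)
    else if α ≠ 0 ∧ i = r α then algebraMap R (FA n) mu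
    else if i = l α then 1
    else if i = o α then -(gen (o α) (l α) (hlo α).symm)
    else 0

/-- The matrix `Ψ^L₂` of the framed knot DGA. -/
def PsiL2 (n : ℕ) (o l : Fin n → Fin n) (hlo : ∀ α, l α ≠ o α) :
    Matrix (Fin n) (Fin n) (FA n) := fun α i =>
  if i = l α then algebraMap R (FA n) mu
  else if i = o α then -(gen (l α) (o α) (hlo α))
  else 0

/-- The matrix `Ψ^R₁` of the framed knot DGA. -/
def PsiR1 (n : ℕ) [NeZero n] (r : Fin n → Fin n) (ε : ℤ) :
    Matrix (Fin n) (Fin n) (FA n) := fun i α =>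
  if α = 0 ∧ i = r 0 then algebraMap R (FA n) (lamPow ε * mu)
  else if α ≠ 0 ∧ i = r α then algebraMap R (FA n) mu
  else 0

/-!
Row `α` of `Ψ^L` is `c·e_{r(α)}` plus row `α` of `Ψ^L₂`, and column `α` of `Ψ^R` is column `α`
of `Ψ^R₁` (which is `c'·e_{r(α)}`) plus `e_{l(α)} - a_{o(α)l(α)}·e_{o(α)}`, where `c = λ^{-ε}`,
`c' = λ^ε μ` at crossing `0` and `c = 1`, `c' = μ` elsewhere. Expanding both sides bilinearly,
the common term `(Ψ^L₂·A·Ψ^R₁)_{αα}` cancels, and what remains on each side is `μ(1 + μ)`: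
on the left `c·(1 + μ)·c'` with `c c' = μ`, on the right a product through the `2 × 2` block
of `A` on `{l(α), o(α)}`, in which the two `a_{lo} a_{ol}` terms cancel because `μ` is central.
-/

open Matrix

theorem Matrix.mul_mul_apply_eq_dotProduct_mulVec {S ι κ ν : Type*} [NonUnitalSemiring S]
    [Fintype κ] [Fintype ν] (M : Matrix ι κ S) (A : Matrix κ ν S) (N : Matrix ν ι S) (i j : ι) :
    (M * A * N) i j = M i ⬝ᵥ (A *ᵥ Nᵀ j) := by
  rw [Matrix.mul_assoc, mul_apply']
  rfl

section Ring

variable {S ι : Type*} [Ring S] [Fintype ι] [DecidableEq ι]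

theorem single_dotProduct_mulVec_single (A : Matrix ι ι S) (i j : ι) (a b : S) :
    Pi.single i a ⬝ᵥ (A *ᵥ Pi.single j b) = a * A i j * b := by
  simp [single_dotProduct, mul_assoc]

theorem single_add_dotProduct_mulVec_single_eq (A : Matrix ι ι S) (r : ι) (a b : S)
    (u w : ι → S) (h : a * A r r * b = u ⬝ᵥ (A *ᵥ w)) :
    (Pi.single r a + u) ⬝ᵥ (A *ᵥ Pi.single r b) = u ⬝ᵥ (A *ᵥ (Pi.single r b + w)) := by
  rw [add_dotProduct, mulVec_add, dotProduct_add, single_dotProduct_mulVec_single, h, add_comm]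

theorem single_sub_single_dotProduct_mulVec (A : Matrix ι ι S) {l o : ι} (m : S)
    (hm : Commute m (A l o)) (hll : A l l = 1 + m) (hoo : A o o = 1 + m) :
    (Pi.single l m - Pi.single o (A l o)) ⬝ᵥ (A *ᵥ (Pi.single l 1 - Pi.single o (A o l))) =
      m * (1 + m) := by
  have hcomm : A l o * (1 + m) * A o l = A l o * A o l + m * A l o * A o l := by
    rw [mul_one_add, add_mul, ← hm.eq, mul_assoc m]
  simp only [sub_dotProduct, mulVec_sub, dotProduct_sub, single_dotProduct_mulVec_single, hll,
    hoo, hcomm]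
  noncomm_ring

end Ring

theorem lamPow_neg_mul_self (k : ℤ) : lamPow (-k) * lamPow k = 1 := by
  rw [lamPow, lamPow, AddMonoidAlgebra.single_mul_single, Prod.mk_add_mk, neg_add_cancel,
    add_zero, mul_one]
  rfl

def lamPowAt {n : ℕ} [NeZero n] (k : ℤ) (α : Fin n) : R := if α = 0 then lamPow k else 1

theorem lamPowAt_neg_mul_self {n : ℕ} [NeZero n] (k : ℤ) (α : Fin n) :
    lamPowAt (-k) α * lamPowAt k α = 1 := by
  unfold lamPowAt
  split_ifs
  · exact lamPow_neg_mul_self k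
  · exact one_mul 1

section Knot

variable {n : ℕ} (o l r : Fin n → Fin n) (hlo : ∀ α, l α ≠ o α)

theorem Amat_self (i : Fin n) : Amat n i i = 1 + algebraMap R (FA n) mu := by
  rw [Amat, dif_pos rfl, map_add, map_one]

theorem Amat_of_ne {i j : Fin n} (h : i ≠ j) : Amat n i j = gen i j h := dif_neg h

theorem PsiL2_row (α : Fin n) :
    PsiL2 n o l hlo α =
      Pi.single (l α) (algebraMap R (FA n) mu) - Pi.single (o α) (Amat n (l α) (o α)) := by
  ext i
  simp only [PsiL2, Amat_of_ne (hlo α), Pi.sub_apply, Pi.single_apply]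
  split_ifs <;> grind

variable [NeZero n] (ε : ℤ)

theorem PsiL_row {α : Fin n} (hlr : l α ≠ r α) (hro : r α ≠ o α) :
    PsiL n o l r hlo ε α =
      Pi.single (r α) (algebraMap R (FA n) (lamPowAt (-ε) α)) + PsiL2 n o l hlo α := by
  ext i
  simp only [PsiL, PsiL2, lamPowAt, Pi.add_apply, Pi.single_apply]
  split_ifs <;> grind

theorem PsiR1_col (α : Fin n) :
    (PsiR1 n r ε)ᵀ α = Pi.single (r α) (algebraMap R (FA n) (lamPowAt ε α * mu)) := by
  ext i
  simp only [PsiR1, lamPowAt, transpose_apply, Pi.single_apply]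
  split_ifs <;> grind

theorem PsiR_col {α : Fin n} (hlr : l α ≠ r α) (hro : r α ≠ o α) :
    (PsiR n o l r hlo ε)ᵀ α =
      (PsiR1 n r ε)ᵀ α + (Pi.single (l α) 1 - Pi.single (o α) (Amat n (o α) (l α))) := by
  ext i
  simp only [PsiR, PsiR1, Amat_of_ne (hlo α).symm, transpose_apply, Pi.add_apply, Pi.sub_apply,
    Pi.single_apply]
  split_ifs <;> grind

end Knot

theorem framedKnotDGA_differential_squared_zero_general (n : ℕ) [NeZero n]
    (o l r : Fin n → Fin n)
    (hlo : ∀ α, l α ≠ o α) (hlr : ∀ α, l α ≠ r α) (hro : ∀ α, r α ≠ o α)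
    (ε : ℤ) :
    ∀ α : Fin n,
      (PsiL n o l r hlo ε * Amat n * PsiR1 n r ε) α α =
        (PsiL2 n o l hlo * Amat n * PsiR n o l r hlo ε) α α := by
  intro α
  rw [mul_mul_apply_eq_dotProduct_mulVec, mul_mul_apply_eq_dotProduct_mulVec,
    PsiL_row o l r hlo ε (hlr α) (hro α), PsiR_col o l r hlo ε (hlr α) (hro α), PsiR1_col,
    PsiL2_row]
  apply single_add_dotProduct_mulVec_single_eq
  rw [single_sub_single_dotProduct_mulVec _ _ (Algebra.commute_algebraMap_left _ _) (Amat_self _)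
    (Amat_self _), Amat_self]
  simp only [← map_one (algebraMap R (FA n)), ← map_add, ← map_mul]
  congr 1
  linear_combination (1 + mu) * mu * lamPowAt_neg_mul_self ε α

/-- The key identity behind `∂² = 0` on the generators `e_α` of the framed
knot DGA: `(Ψ^L·A·Ψ^R₁)_{αα} = (Ψ^L₂·A·Ψ^R)_{αα}` for every crossing `α`. -/
theorem framedKnotDGA_differential_squared_zero (n : ℕ) [NeZero n]
    (o l r : Fin n → Fin n)
    (hlo : ∀ α, l α ≠ o α) (hlr : ∀ α, l α ≠ r α) (hro : ∀ α, r α ≠ o α)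
    (ε : ℤ) (hε : ε = 1 ∨ ε = -1) :
    ∀ α : Fin n,
      (PsiL n o l r hlo ε * Amat n * PsiR1 n r ε) α α =
        (PsiL2 n o l hlo * Amat n * PsiR n o l r hlo ε) α α :=
  framedKnotDGA_differential_squared_zero_general n o l r hlo hlr hro ε
end
end
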